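/- Fix a composition α of n and σ ∈ S_{ℓ(α^c)}, where α^c is the complement composition. For a standard ribbon tableau T of shape α, define τ_T to be the filling of the composition diagram of α^c·σ whose i-th row consists of the entries of column σ(i) of T arranged in decreasing order. Then for every SPCT τ of shape α^c·σ and type σ, there exists a standard ribbon tableau T of shape α with τ_T = τ; i.e., the map T ↦ τ_T (set to 0 when τ_T is not an SPCT of type σ) is surjective onto SPCT^σ(α^c·σ). Concretely, T can be built by filling column i of the ribbon diagram of α with the entries of row σ^{-1}(i) of τ in increasing order top to bottom. -/
import Mathlib


/-- `α` is compatible with `σ`: `α_i ≥ α_j` whenever `i < j` and `σ(i) > σ(j)`. -/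
def Compatible {ℓ : ℕ} (α : Fin ℓ → ℕ) (σ : Equiv.Perm (Fin ℓ)) : Prop :=
  ∀ i j : Fin ℓ, i < j → σ j < σ i → α j ≤ α i

/-- `τ` is a standard permuted composition tableau (SPCT) of shape `α` (a composition of `n`
with `ℓ` rows, row `i` having boxes in columns `0,…,α i − 1`) and type `σ`:
the boxes are filled with the distinct entries `1,…,n`; the standardization of the first
column read top to bottom is `σ` (expressed by order-equivalence with `σ`); rows weakly
decrease left to right; and the triple condition holds. -/
def IsSPCT {ℓ : ℕ} (n : ℕ) (α : Fin ℓ → ℕ) (σ : Equiv.Perm (Fin ℓ))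
    (τ : Fin ℓ → ℕ → ℕ) : Prop :=
  (∀ (i : Fin ℓ) (c : ℕ), c < α i → 1 ≤ τ i c ∧ τ i c ≤ n) ∧
  (∀ (i : Fin ℓ) (c : ℕ) (i' : Fin ℓ) (c' : ℕ),
      c < α i → c' < α i' → τ i c = τ i' c' → i = i' ∧ c = c') ∧
  (∀ v : ℕ, 1 ≤ v → v ≤ n → ∃ (i : Fin ℓ) (c : ℕ), c < α i ∧ τ i c = v) ∧
  (∀ i i' : Fin ℓ, τ i 0 < τ i' 0 ↔ σ i < σ i') ∧
  (∀ (i : Fin ℓ) (c : ℕ), c + 1 < α i → τ i (c + 1) ≤ τ i c) ∧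
  (∀ (i i' : Fin ℓ) (c : ℕ), i < i' → c < α i → c + 1 < α i' →
      τ i' (c + 1) < τ i c → c + 1 < α i ∧ τ i' (c + 1) < τ i (c + 1))

/-- `d` is a descent of `τ`: the entry `d+1` lies weakly to the right of `d`. -/
def IsDescent {ℓ : ℕ} (α : Fin ℓ → ℕ) (τ : Fin ℓ → ℕ → ℕ) (d : ℕ) : Prop :=
  ∃ (i : Fin ℓ) (c : ℕ) (i' : Fin ℓ) (c' : ℕ),
    c < α i ∧ c' < α i' ∧ τ i c = d ∧ τ i' c' = d + 1 ∧ c ≤ c'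

/-- `τ` is a source tableau: an SPCT such that for every non-descent `d ≠ n`, the entry
`d+1` lies in the box immediately to the left of the box containing `d`. -/
def IsSourceTableau {ℓ : ℕ} (n : ℕ) (α : Fin ℓ → ℕ) (σ : Equiv.Perm (Fin ℓ))
    (τ : Fin ℓ → ℕ → ℕ) : Prop :=
  IsSPCT n α σ τ ∧
  ∀ d : ℕ, 1 ≤ d → d + 1 ≤ n → ¬ IsDescent α τ d →
    ∀ (i : Fin ℓ) (c : ℕ), c < α i → τ i c = d → ∃ c', c = c' + 1 ∧ τ i c' = d + 1

/-- `(i,j)` is a permutation-ascending composition-descending (PACD) pair for `(α; σ)`. -/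
def PACD {ℓ : ℕ} (α : Fin ℓ → ℕ) (σ : Equiv.Perm (Fin ℓ)) (i j : Fin ℓ) : Prop :=
  i < j ∧ σ i < σ j ∧ 2 ≤ α j ∧ α j ≤ α i

/-- `α` is `σ`-simple: it is compatible with `σ` and every PACD pair satisfies C1 or C2. -/
def SigmaSimple {ℓ : ℕ} (α : Fin ℓ → ℕ) (σ : Equiv.Perm (Fin ℓ)) : Prop :=
  Compatible α σ ∧
  ∀ i j : Fin ℓ, PACD α σ i j →
    (∃ k, i < k ∧ k < j ∧ σ i < σ k ∧ σ k < σ j ∧ α k = α j - 1) ∨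
    (∃ k, j < k ∧ σ i < σ k ∧ σ k < σ j ∧ α k = α j)

/-- The part `α_j` has a removable node with respect to `σ`: either `σ(j) = 1`
(the smallest value, `0` in `Fin ℓ`), or `α_j ≥ 2`, no `k < j` has `σ(k) < σ(j)` and
`α_k = α_j − 1`, and no `k > j` has `σ(k) < σ(j)` and `α_k = α_j`. -/
def Removable {ℓ : ℕ} (α : Fin ℓ → ℕ) (σ : Equiv.Perm (Fin ℓ)) (j : Fin ℓ) : Prop :=
  (σ j : ℕ) = 0 ∨
  (2 ≤ α j ∧ (∀ k, k < j → σ k < σ j → α k ≠ α j - 1) ∧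
    (∀ k, j < k → σ k < σ j → α k ≠ α j))

/-- The canonical source tableau `τ^σ_{C,α}`: row `r` is filled, in decreasing order from
left to right, with the consecutive block of integers following all entries of rows `r'`
with `σ r' < σ r`. -/
def canonEntry {ℓ : ℕ} (α : Fin ℓ → ℕ) (σ : Equiv.Perm (Fin ℓ)) (r : Fin ℓ) (c : ℕ) : ℕ :=
  (∑ j ∈ Finset.univ.filter (fun j => σ j < σ r), α j) + α r - c

/-- Proper partial sums of a `Fin`-indexed composition: `set(β)`. -/
def psums {k : ℕ} (β : Fin k → ℕ) : Finset ℕ :=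
  (Finset.range (k - 1)).image
    (fun t => ∑ j ∈ Finset.univ.filter (fun j : Fin k => (j : ℕ) ≤ t), β j)

/-- The starting (leftmost) global column of row `i` (counted from the bottom) in the
ribbon diagram of `α`: the leftmost box of each row sits above the rightmost box of the
row below. -/
def rstart {ℓ : ℕ} (α : Fin ℓ → ℕ) (i : Fin ℓ) : ℕ :=
  ∑ j ∈ Finset.univ.filter (fun j : Fin ℓ => j < i), (α j - 1)

/-- `(i, c)` is a cell of the ribbon diagram of `α` (row `i` from the bottom, global
column `c`). -/
def rcell {ℓ : ℕ} (α : Fin ℓ → ℕ) (i : Fin ℓ) (c : ℕ) : Prop :=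
  rstart α i ≤ c ∧ c < rstart α i + α i

/-- `T` is a standard ribbon tableau of shape `α`: the cells of the ribbon diagram are
filled with `1,…,n` (each once), rows increase left to right, and columns increase top to
bottom (rows are indexed from the bottom, so a higher row carries a smaller entry). -/
def IsSRT {ℓ : ℕ} (n : ℕ) (α : Fin ℓ → ℕ) (T : Fin ℓ → ℕ → ℕ) : Prop :=
  (∀ (i : Fin ℓ) (c : ℕ), rcell α i c → 1 ≤ T i c ∧ T i c ≤ n) ∧
  (∀ (i : Fin ℓ) (c : ℕ) (i' : Fin ℓ) (c' : ℕ),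
      rcell α i c → rcell α i' c' → T i c = T i' c' → i = i' ∧ c = c') ∧
  (∀ v : ℕ, 1 ≤ v → v ≤ n → ∃ (i : Fin ℓ) (c : ℕ), rcell α i c ∧ T i c = v) ∧
  (∀ (i : Fin ℓ) (c : ℕ), rcell α i c → rcell α i (c + 1) → T i c < T i (c + 1)) ∧
  (∀ (i i' : Fin ℓ) (c : ℕ), i < i' → rcell α i c → rcell α i' c → T i' c < T i c)

namespace RibbonAux
open Finset

variable {ℓ : ℕ}

def SA (α : Fin ℓ → ℕ) (k : ℕ) : ℕ :=
  ∑ j ∈ Finset.univ.filter (fun j : Fin ℓ => (j : ℕ) < k), α j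

def SR (α : Fin ℓ → ℕ) (k : ℕ) : ℕ :=
  ∑ j ∈ Finset.univ.filter (fun j : Fin ℓ => (j : ℕ) < k), (α j - 1)

lemma filter_lt_succ {k : ℕ} (hk : k < ℓ) :
    Finset.univ.filter (fun j : Fin ℓ => (j : ℕ) < k + 1) =
      insert ⟨k, hk⟩ (Finset.univ.filter (fun j : Fin ℓ => (j : ℕ) < k)) := by
  ext j
  simp only [mem_filter, mem_univ, true_and, mem_insert, Fin.ext_iff]
  omega

lemma filter_lt_of_ge {k : ℕ} (hk : ℓ ≤ k) :
    Finset.univ.filter (fun j : Fin ℓ => (j : ℕ) < k) = Finset.univ := by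
  ext j
  simp only [mem_filter, mem_univ, true_and, iff_true]
  exact lt_of_lt_of_le j.isLt hk

lemma SA_succ (α : Fin ℓ → ℕ) {k : ℕ} (hk : k < ℓ) :
    SA α (k + 1) = SA α k + α ⟨k, hk⟩ := by
  rw [SA, SA, filter_lt_succ hk, Finset.sum_insert (by simp)]
  ring

lemma SR_succ (α : Fin ℓ → ℕ) {k : ℕ} (hk : k < ℓ) :
    SR α (k + 1) = SR α k + (α ⟨k, hk⟩ - 1) := by
  rw [SR, SR, filter_lt_succ hk, Finset.sum_insert (by simp)]
  ring

lemma SA_top (α : Fin ℓ → ℕ) {k : ℕ} (hk : ℓ ≤ k) : SA α k = ∑ j, α j := by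
  rw [SA, filter_lt_of_ge hk]

lemma SA_mono (α : Fin ℓ → ℕ) : Monotone (SA α) := by
  intro a b hab
  exact Finset.sum_le_sum_of_subset (by
    intro j hj
    simp only [mem_filter, mem_univ, true_and] at hj ⊢
    omega)

lemma SR_mono (α : Fin ℓ → ℕ) : Monotone (SR α) := by
  intro a b hab
  exact Finset.sum_le_sum_of_subset (by
    intro j hj
    simp only [mem_filter, mem_univ, true_and] at hj ⊢
    omega)

lemma SA_eq_SR_add (α : Fin ℓ → ℕ) (hpos : ∀ i, 0 < α i) :
    ∀ k, k ≤ ℓ → SA α k = SR α k + k := by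
  intro k
  induction k with
  | zero => intro _; simp [SA, SR]
  | succ k ih =>
    intro hk
    have hk' : k < ℓ := hk
    rw [SA_succ α hk', SR_succ α hk', ih (le_of_lt hk')]
    have := hpos ⟨k, hk'⟩
    omega

lemma SA_add_le (α : Fin ℓ → ℕ) (hpos : ∀ i, 0 < α i) :
    ∀ k k', k ≤ k' → k' ≤ ℓ → SA α k + (k' - k) ≤ SA α k' := by
  intro k k' hkk' hk'
  have h1 := SA_eq_SR_add α hpos k (le_trans hkk' hk')
  have h2 := SA_eq_SR_add α hpos k' hk'
  have := SR_mono α hkk'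
  omega

lemma SR_zero (α : Fin ℓ → ℕ) : SR α 0 = 0 := by simp [SR]

lemma SA_zero (α : Fin ℓ → ℕ) : SA α 0 = 0 := by simp [SA]

lemma mem_psums_iff (α : Fin ℓ → ℕ) (x : ℕ) :
    x ∈ psums α ↔ ∃ k, 1 ≤ k ∧ k ≤ ℓ - 1 ∧ SA α k = x := by
  unfold psums
  rw [Finset.mem_image]
  constructor
  · rintro ⟨t, ht, rfl⟩
    rw [Finset.mem_range] at ht
    refine ⟨t + 1, by omega, by omega, ?_⟩
    rw [SA]
    apply Finset.sum_congr _ (fun _ _ => rfl)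
    apply Finset.filter_congr
    intro j _
    simp [Nat.lt_succ_iff]
  · rintro ⟨k, hk1, hk2, rfl⟩
    refine ⟨k - 1, Finset.mem_range.mpr (by omega), ?_⟩
    rw [SA]
    apply Finset.sum_congr _ (fun _ _ => rfl)
    apply Finset.filter_congr
    intro j _
    simp only [Nat.lt_iff_add_one_le]
    omega

/-- The counting function `K`. -/
def Kcard (α : Fin ℓ → ℕ) (c : ℕ) : ℕ :=
  ((Finset.Icc 1 (ℓ - 1)).filter (fun k => SA α k ≤ c + k)).card

section Enum

variable {m n : ℕ} (α : Fin ℓ → ℕ) (β : Fin m → ℕ)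
  (hposα : ∀ i, 0 < α i) (hposβ : ∀ i, 0 < β i)
  (hsumα : ∑ i, α i = n) (hsumβ : ∑ i, β i = n)
  (hcompl : ∀ k : ℕ, k ∈ psums β ↔ (1 ≤ k ∧ k ≤ n - 1 ∧ k ∉ psums α))
  (hℓ : 1 ≤ ℓ)

include hposα hsumα hℓ in
lemma psums_bounds {x : ℕ} (hx : x ∈ psums α) : 1 ≤ x ∧ x < n := by
  rw [mem_psums_iff] at hx
  obtain ⟨k, hk1, hk2, rfl⟩ := hx
  have h1 := SA_eq_SR_add α hposα k (by omega)
  have h2 := SA_add_le α hposα k ℓ (by omega) le_rfl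
  rw [SA_top α le_rfl, hsumα] at h2
  omega

include hposα hsumα hℓ in
lemma n_le : ℓ ≤ n := by
  have h := SA_eq_SR_add α hposα ℓ le_rfl
  rw [SA_top α le_rfl, hsumα] at h
  omega

include hposα in
lemma card_psums : (psums α).card = ℓ - 1 := by
  have himg : psums α = (Finset.range (ℓ - 1)).image (fun t => SA α (t + 1)) := by
    unfold psums
    apply Finset.image_congr
    intro t _
    dsimp only
    unfold SA
    apply Finset.sum_congr _ (fun _ _ => rfl)
    apply Finset.filter_congr
    intro j _
    simp [Nat.lt_succ_iff]
  rw [himg, Finset.card_image_of_injOn, Finset.card_range]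
  intro t ht t' ht' heq
  dsimp only at heq
  simp only [Finset.coe_range, Set.mem_Iio] at ht ht'
  by_contra hne
  rcases Nat.lt_or_ge t t' with h | h
  · have := SA_add_le α hposα (t + 1) (t' + 1) (by omega) (by omega)
    omega
  · have ht'' : t' < t := by omega
    have := SA_add_le α hposα (t' + 1) (t + 1) (by omega) (by omega)
    omega


include hposα hposβ hsumα hsumβ hcompl hℓ in
lemma enum_eq (hm : 1 ≤ m) (hn : 1 ≤ n) :
    m = n + 1 - ℓ ∧ ∀ c : ℕ, c < m → SA β (c + 1) = c + 1 + Kcard α c := by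
  classical
  set s : Finset ℕ := Finset.Icc 1 n \ psums α with hs
  have hℓn : ℓ ≤ n := n_le α hposα hsumα hℓ
  have hsub : psums α ⊆ Finset.Icc 1 n := by
    intro x hx
    have := psums_bounds α hposα hsumα hℓ hx
    exact Finset.mem_Icc.mpr ⟨this.1, by omega⟩
  have hscard : s.card = n - (ℓ - 1) := by
    rw [hs, Finset.card_sdiff_of_subset hsub, card_psums α hposα, Nat.card_Icc]
    omega
  have hSAβtop : SA β m = n := by rw [SA_top β le_rfl, hsumβ]
  set e : Fin m → ℕ := fun c => SA β ((c : ℕ) + 1) with he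
  have hemono : StrictMono e := by
    intro c c' hcc'
    have := SA_add_le β hposβ ((c : ℕ) + 1) ((c' : ℕ) + 1) (by omega) (by omega)
    have hcc'' : (c : ℕ) < (c' : ℕ) := hcc'
    simp only [he]
    omega
  have hes : ∀ c, e c ∈ s := by
    intro c
    rcases Nat.lt_or_ge ((c : ℕ) + 1) m with hc | hc
    · have hmem : e c ∈ psums β :=
        (mem_psums_iff β _).mpr ⟨(c : ℕ) + 1, by omega, by omega, rfl⟩
      have h2 := (hcompl _).mp hmem
      exact Finset.mem_sdiff.mpr ⟨Finset.mem_Icc.mpr ⟨h2.1, by omega⟩, h2.2.2⟩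
    · have hc' : (c : ℕ) + 1 = m := by have := c.isLt; omega
      have hecn : e c = n := by rw [he]; simp only; rw [hc', hSAβtop]
      rw [hecn]
      refine Finset.mem_sdiff.mpr ⟨Finset.mem_Icc.mpr ⟨hn, le_rfl⟩, ?_⟩
      intro hmem
      have := psums_bounds α hposα hsumα hℓ hmem
      omega
  have himg : Finset.image e Finset.univ = s := by
    apply Finset.Subset.antisymm
    · intro x hx
      rw [Finset.mem_image] at hx
      obtain ⟨c, _, rfl⟩ := hx
      exact hes c
    · intro x hx
      rw [Finset.mem_image]
      rw [hs, Finset.mem_sdiff, Finset.mem_Icc] at hx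
      rcases Nat.lt_or_ge x n with hxn | hxn
      · have hmem : x ∈ psums β := (hcompl x).mpr ⟨hx.1.1, by omega, hx.2⟩
        rw [mem_psums_iff] at hmem
        obtain ⟨k, hk1, hk2, rfl⟩ := hmem
        refine ⟨⟨k - 1, by omega⟩, Finset.mem_univ _, ?_⟩
        rw [he]
        simp only
        congr 1
        omega
      · have hxn' : x = n := by omega
        refine ⟨⟨m - 1, by omega⟩, Finset.mem_univ _, ?_⟩
        rw [he]
        simp only
        rw [hxn']
        rw [show (((⟨m - 1, by omega⟩ : Fin m) : ℕ) + 1) = m by simp; omega]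
        exact hSAβtop
  have hscardm : s.card = m := by
    rw [← himg, Finset.card_image_of_injective _ hemono.injective, Finset.card_univ,
      Fintype.card_fin]
  have hmeq : m = n + 1 - ℓ := by omega
  -- the `g` function
  set g : Fin m → ℕ := fun c => (c : ℕ) + 1 + Kcard α c with hg
  have hKmono : ∀ c c' : ℕ, c ≤ c' → Kcard α c ≤ Kcard α c' := by
    intro c c' hcc'
    apply Finset.card_le_card
    intro k hk
    rw [Finset.mem_filter] at hk ⊢
    exact ⟨hk.1, by omega⟩
  have hKle : ∀ c : ℕ, Kcard α c ≤ ℓ - 1 := by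
    intro c
    calc Kcard α c ≤ (Finset.Icc 1 (ℓ - 1)).card := Finset.card_filter_le _ _
    _ = ℓ - 1 := by rw [Nat.card_Icc]; omega
  have hgmono : StrictMono g := by
    intro c c' hcc'
    have h1 := hKmono c c' (le_of_lt hcc')
    have hcc'' : (c : ℕ) < (c' : ℕ) := hcc'
    simp only [hg]
    omega
  have hdc : ∀ k k', 1 ≤ k → k ≤ k' → k' ≤ ℓ → ∀ c : ℕ,
      SA α k' ≤ c + k' → SA α k ≤ c + k := by
    intro k k' h1 h2 h3 c h4
    have := SA_add_le α hposα k k' h2 h3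
    omega
  have hgs : ∀ c, g c ∈ s := by
    intro c
    rw [hs, Finset.mem_sdiff, Finset.mem_Icc]
    have hKc := hKle (c : ℕ)
    have hcm : (c : ℕ) < m := c.isLt
    have hgle : g c ≤ n := by
      have h1 : (c : ℕ) ≤ n - ℓ := by omega
      simp only [hg]
      omega
    refine ⟨⟨by simp only [hg]; omega, hgle⟩, ?_⟩
    intro hmem
    rw [mem_psums_iff] at hmem
    obtain ⟨t, ht1, ht2, hteq⟩ := hmem
    simp only [hg] at hteq
    by_cases hP : SA α t ≤ (c : ℕ) + t
    · have hsubt : Finset.Icc 1 t ⊆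
          (Finset.Icc 1 (ℓ - 1)).filter (fun k => SA α k ≤ (c : ℕ) + k) := by
        intro k hk
        rw [Finset.mem_Icc] at hk
        rw [Finset.mem_filter, Finset.mem_Icc]
        exact ⟨⟨hk.1, by omega⟩, hdc k t hk.1 hk.2 (by omega) _ hP⟩
      have hcard := Finset.card_le_card hsubt
      rw [Nat.card_Icc] at hcard
      have : t ≤ Kcard α (c : ℕ) := by rw [Kcard]; omega
      omega
    · have hsubt : (Finset.Icc 1 (ℓ - 1)).filter (fun k => SA α k ≤ (c : ℕ) + k) ⊆
          Finset.Icc 1 (t - 1) := by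
        intro k hk
        rw [Finset.mem_filter, Finset.mem_Icc] at hk
        rw [Finset.mem_Icc]
        refine ⟨hk.1.1, ?_⟩
        by_contra hkt
        exact hP (hdc t k ht1 (by omega) (by omega) _ hk.2)
      have hcard := Finset.card_le_card hsubt
      rw [Nat.card_Icc] at hcard
      have : Kcard α (c : ℕ) ≤ t - 1 := by rw [Kcard]; omega
      omega
  have h1 := Finset.orderEmbOfFin_unique hscardm hes hemono
  have h2 := Finset.orderEmbOfFin_unique hscardm hgs hgmono
  refine ⟨hmeq, ?_⟩
  intro c hc
  have := congrFun (h1.trans h2.symm) ⟨c, hc⟩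
  simpa [he, hg] using this

end Enum

section Geom

/-- Number of `k ∈ [1, ℓ-1]` with `SR α k = c`. -/
def Dcard (α : Fin ℓ → ℕ) (c : ℕ) : ℕ :=
  ((Finset.Icc 1 (ℓ - 1)).filter (fun k => SR α k = c)).card

/-- Bottom row of column `c`. -/
def lo (α : Fin ℓ → ℕ) (c : ℕ) : ℕ :=
  Nat.find (⟨ℓ, Or.inr (Nat.le_succ ℓ)⟩ : ∃ k, c ≤ SR α (k + 1) ∨ ℓ ≤ k + 1)

variable (α : Fin ℓ → ℕ) {c : ℕ}

lemma lo_min {k : ℕ} (h : c ≤ SR α (k + 1)) : lo α c ≤ k :=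
  Nat.find_min' _ (Or.inl h)

lemma lo_le (hℓ : 1 ≤ ℓ) (hc : c ≤ SR α ℓ) : lo α c ≤ ℓ - 1 := by
  apply lo_min
  rwa [show ℓ - 1 + 1 = ℓ by omega]

lemma lo_spec (hℓ : 1 ≤ ℓ) (hc : c ≤ SR α ℓ) : c ≤ SR α (lo α c + 1) := by
  rcases Nat.find_spec (⟨ℓ, Or.inr (Nat.le_succ ℓ)⟩ :
      ∃ k, c ≤ SR α (k + 1) ∨ ℓ ≤ k + 1) with h | h
  · exact h
  · exact le_trans hc (SR_mono α h)

lemma lo_lt_imp {k : ℕ} (hk : k < lo α c) : SR α (k + 1) < c := by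
  have := Nat.find_min (⟨ℓ, Or.inr (Nat.le_succ ℓ)⟩ :
      ∃ k, c ≤ SR α (k + 1) ∨ ℓ ≤ k + 1) hk
  push_neg at this
  omega

lemma SR_lo_le : SR α (lo α c) ≤ c := by
  rcases Nat.eq_zero_or_pos (lo α c) with h | h
  · rw [h, SR_zero]; exact Nat.zero_le c
  · have := lo_lt_imp α (show lo α c - 1 < lo α c by omega)
    rw [show lo α c - 1 + 1 = lo α c by omega] at this
    omega

lemma ge_of_ge (hℓ : 1 ≤ ℓ) (hc : c ≤ SR α ℓ) {k : ℕ} (hk : lo α c + 1 ≤ k) :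
    c ≤ SR α k :=
  le_trans (lo_spec α hℓ hc) (SR_mono α hk)

lemma rstart_eq (i : Fin ℓ) : rstart α i = SR α (i : ℕ) := by
  unfold rstart SR
  apply Finset.sum_congr _ (fun _ _ => rfl)
  apply Finset.filter_congr
  intro j _
  exact Fin.lt_def

lemma SR_succ_fin (hpos : ∀ i, 0 < α i) (i : Fin ℓ) :
    SR α ((i : ℕ) + 1) + 1 = SR α (i : ℕ) + α i := by
  rw [SR_succ α i.isLt]
  have h1 : (⟨(i : ℕ), i.isLt⟩ : Fin ℓ) = i := rfl
  rw [h1]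
  have := hpos i
  omega

lemma rcell_le_top (hpos : ∀ i, 0 < α i) {i : Fin ℓ} (h : rcell α i c) :
    c ≤ SR α ℓ := by
  obtain ⟨h1, h2⟩ := h
  rw [rstart_eq] at h2
  have h3 := SR_succ_fin α hpos i
  have h4 := SR_mono α (show (i : ℕ) + 1 ≤ ℓ from i.isLt)
  omega

lemma rcell_iff (hpos : ∀ i, 0 < α i) (hℓ : 1 ≤ ℓ) (hc : c ≤ SR α ℓ) (i : Fin ℓ) :
    rcell α i c ↔ (lo α c ≤ (i : ℕ) ∧ SR α (i : ℕ) ≤ c) := by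
  unfold rcell
  rw [rstart_eq]
  have hsucc := SR_succ_fin α hpos i
  constructor
  · rintro ⟨h1, h2⟩
    exact ⟨lo_min α (by omega), h1⟩
  · rintro ⟨h1, h2⟩
    have := ge_of_ge α hℓ hc (show lo α c + 1 ≤ (i : ℕ) + 1 by omega)
    exact ⟨h2, by omega⟩

lemma top_bound (hpos : ∀ i, 0 < α i) (hℓ : 1 ≤ ℓ) (hc : c ≤ SR α ℓ) {i : Fin ℓ}
    (h1 : lo α c ≤ (i : ℕ)) (h2 : SR α (i : ℕ) ≤ c) :
    (i : ℕ) ≤ lo α c + Dcard α c := by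
  have hsub : Finset.Icc (lo α c + 1) (i : ℕ) ⊆
      (Finset.Icc 1 (ℓ - 1)).filter (fun k => SR α k = c) := by
    intro k hk
    rw [Finset.mem_Icc] at hk
    rw [Finset.mem_filter, Finset.mem_Icc]
    have hge := ge_of_ge α hℓ hc hk.1
    have hle := le_trans (SR_mono α hk.2) h2
    have := i.isLt
    exact ⟨⟨by omega, by omega⟩, by omega⟩
  have := Finset.card_le_card hsub
  rw [Nat.card_Icc] at this
  rw [Dcard] at *
  omega

lemma SR_le_of_le (hℓ : 1 ≤ ℓ) (hc : c ≤ SR α ℓ) {i : ℕ}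
    (h : i ≤ lo α c + Dcard α c) : SR α i ≤ c := by
  rcases le_or_gt i (lo α c) with hi | hi
  · exact le_trans (SR_mono α hi) (SR_lo_le α)
  by_contra h'
  push_neg at h'
  have hsub : (Finset.Icc 1 (ℓ - 1)).filter (fun k => SR α k = c) ⊆
      Finset.Icc (lo α c + 1) (i - 1) := by
    intro k hk
    rw [Finset.mem_filter, Finset.mem_Icc] at hk
    rw [Finset.mem_Icc]
    obtain ⟨⟨hk1, hk2⟩, hk3⟩ := hk
    have hlo : lo α c ≤ k - 1 := lo_min α (by rw [show k - 1 + 1 = k by omega]; omega)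
    have hki : k < i := by
      by_contra hki
      have := SR_mono α (show i ≤ k by omega)
      omega
    omega
  have := Finset.card_le_card hsub
  rw [Nat.card_Icc] at this
  rw [Dcard] at h
  omega

lemma topD_le (hℓ : 1 ≤ ℓ) (hc : c ≤ SR α ℓ) : lo α c + Dcard α c ≤ ℓ - 1 := by
  have hsub : (Finset.Icc 1 (ℓ - 1)).filter (fun k => SR α k = c) ⊆
      Finset.Icc (lo α c + 1) (ℓ - 1) := by
    intro k hk
    rw [Finset.mem_filter, Finset.mem_Icc] at hk
    rw [Finset.mem_Icc]
    obtain ⟨⟨hk1, hk2⟩, hk3⟩ := hk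
    have hlo : lo α c ≤ k - 1 := lo_min α (by rw [show k - 1 + 1 = k by omega]; omega)
    omega
  have := Finset.card_le_card hsub
  rw [Nat.card_Icc] at this
  have := lo_le α hℓ hc
  rw [Dcard]
  omega

/-- Full characterization of the cells of a column. -/
lemma rcell_iff' (hpos : ∀ i, 0 < α i) (hℓ : 1 ≤ ℓ) (hc : c ≤ SR α ℓ) (i : Fin ℓ) :
    rcell α i c ↔ (lo α c ≤ (i : ℕ) ∧ (i : ℕ) ≤ lo α c + Dcard α c) := by
  rw [rcell_iff α hpos hℓ hc]
  constructor
  · rintro ⟨h1, h2⟩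
    exact ⟨h1, top_bound α hpos hℓ hc h1 h2⟩
  · rintro ⟨h1, h2⟩
    exact ⟨h1, SR_le_of_le α hℓ hc h2⟩

end Geom

section BetaD

variable (α : Fin ℓ → ℕ) (hpos : ∀ i, 0 < α i)

include hpos in
lemma K_eq_SR (c : ℕ) :
    Kcard α c = ((Finset.Icc 1 (ℓ - 1)).filter (fun k => SR α k ≤ c)).card := by
  rw [Kcard]
  congr 1
  apply Finset.filter_congr
  intro k hk
  rw [Finset.mem_Icc] at hk
  have := SA_eq_SR_add α hpos k (by omega)
  omega

include hpos in
lemma K_zero : Kcard α 0 = Dcard α 0 := by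
  rw [K_eq_SR α hpos, Dcard]
  congr 1
  apply Finset.filter_congr
  intro k _
  omega

include hpos in
lemma K_succ (c : ℕ) : Kcard α (c + 1) = Kcard α c + Dcard α (c + 1) := by
  rw [K_eq_SR α hpos, K_eq_SR α hpos, Dcard]
  have hun : (Finset.Icc 1 (ℓ - 1)).filter (fun k => SR α k ≤ c + 1) =
      ((Finset.Icc 1 (ℓ - 1)).filter (fun k => SR α k ≤ c)) ∪
        ((Finset.Icc 1 (ℓ - 1)).filter (fun k => SR α k = c + 1)) := by
    rw [← Finset.filter_or]
    apply Finset.filter_congr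
    intro k _
    omega
  rw [hun, Finset.card_union_of_disjoint]
  rw [Finset.disjoint_left]
  intro k hk1 hk2
  rw [Finset.mem_filter] at hk1 hk2
  omega

include hpos in
lemma beta_eq {m : ℕ} (β : Fin m → ℕ)
    (hB : ∀ c : ℕ, c < m → SA β (c + 1) = c + 1 + Kcard α c) :
    ∀ (c : ℕ) (hc : c < m), β ⟨c, hc⟩ = 1 + Dcard α c := by
  intro c
  induction c with
  | zero =>
    intro hc
    have h1 := hB 0 hc
    rw [SA_succ β hc, SA_zero] at h1
    rw [← K_zero α hpos]
    omega
  | succ c' ih =>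
    intro hc
    have h1 := hB (c' + 1) hc
    have h2 := hB c' (by omega)
    rw [SA_succ β hc] at h1
    rw [h2, K_succ α hpos] at h1
    omega

end BetaD

end RibbonAux

/-- Surjectivity of `T ↦ τ_T`: fix a composition `α` of `n`, its complement `β = α^c`
(characterized by `set(β) = [n−1] \ set(α)`), and `σ ∈ S_{ℓ(α^c)}`; the shape `α^c·σ` has
`i`-th row of length `β(σ(i))`.  For every SPCT `τ` of shape `α^c·σ` and type `σ`, there
is a standard ribbon tableau `T` of shape `α` with `τ_T = τ`, i.e. for each `i` the
entries of row `i` of `τ` are exactly the entries of column `σ(i)` of `T`. -/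


theorem ribbon_to_spct_surjective {ℓ m n : ℕ} (α : Fin ℓ → ℕ) (β : Fin m → ℕ)
    (hposα : ∀ i, 0 < α i) (hposβ : ∀ i, 0 < β i)
    (hsumα : ∑ i, α i = n) (hsumβ : ∑ i, β i = n)
    (hcompl : ∀ k : ℕ, k ∈ psums β ↔ (1 ≤ k ∧ k ≤ n - 1 ∧ k ∉ psums α))
    (σ : Equiv.Perm (Fin m)) (τ : Fin m → ℕ → ℕ)
    (hτ : IsSPCT n (fun i => β (σ i)) σ τ) :
    ∃ T : Fin ℓ → ℕ → ℕ, IsSRT n α T ∧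
      ∀ (i : Fin m) (v : ℕ),
        ((∃ c, c < β (σ i) ∧ τ i c = v) ↔
          (∃ r : Fin ℓ, rcell α r (σ i) ∧ T r (σ i) = v)) := by
  classical
  obtain ⟨hbd, hinj, hsurj, htype, hdec, -⟩ := hτ
  have hbd : ∀ (i : Fin m) (c : ℕ), c < β (σ i) → 1 ≤ τ i c ∧ τ i c ≤ n := hbd
  have hinj : ∀ (i : Fin m) (c : ℕ) (i' : Fin m) (c' : ℕ),
      c < β (σ i) → c' < β (σ i') → τ i c = τ i' c' → i = i' ∧ c = c' := hinj
  have hsurj : ∀ v : ℕ, 1 ≤ v → v ≤ n → ∃ (i : Fin m) (c : ℕ), c < β (σ i) ∧ τ i c = v := hsurj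
  have hdec : ∀ (i : Fin m) (c : ℕ), c + 1 < β (σ i) → τ i (c + 1) ≤ τ i c := hdec
  rcases Nat.eq_zero_or_pos m with hm0 | hm
  · -- degenerate case `m = 0`, hence `n = 0` and `ℓ = 0`
    subst hm0
    have hn0 : n = 0 := by simpa using hsumβ.symm
    have hl0 : ℓ = 0 := by
      by_contra hl
      have h0 : (0 : ℕ) < ℓ := Nat.pos_of_ne_zero hl
      have := Finset.single_le_sum (f := α) (fun i _ => Nat.zero_le _)
        (Finset.mem_univ (⟨0, h0⟩ : Fin ℓ))
      have := hposα ⟨0, h0⟩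
      omega
    refine ⟨fun _ _ => 0, ⟨?_, ?_, ?_, ?_, ?_⟩, ?_⟩
    · intro i; exact absurd i.isLt (by omega)
    · intro i; exact absurd i.isLt (by omega)
    · intro v h1 h2; omega
    · intro i; exact absurd i.isLt (by omega)
    · intro i; exact absurd i.isLt (by omega)
    · intro i; exact absurd i.isLt (by omega)
  · -- main case
    have hn : 1 ≤ n := by
      have h1 := Finset.single_le_sum (f := β) (fun i _ => Nat.zero_le _)
        (Finset.mem_univ (⟨0, hm⟩ : Fin m))
      have := hposβ ⟨0, hm⟩
      omega
    have hℓ : 1 ≤ ℓ := by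
      by_contra hl
      have hl0 : ℓ = 0 := by omega
      subst hl0
      have : n = 0 := by simpa using hsumα.symm
      omega
    obtain ⟨hmeq, hB⟩ := RibbonAux.enum_eq α β hposα hposβ hsumα hsumβ hcompl hℓ hm hn
    have hβD := RibbonAux.beta_eq α hposα β hB
    have hℓn : ℓ ≤ n := RibbonAux.n_le α hposα hsumα hℓ
    have hSRl : RibbonAux.SR α ℓ = n - ℓ := by
      have h1 := RibbonAux.SA_eq_SR_add α hposα ℓ le_rfl
      rw [RibbonAux.SA_top α le_rfl, hsumα] at h1
      omega
    have hcm : ∀ c : ℕ, c < m ↔ c ≤ RibbonAux.SR α ℓ := by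
      intro c; rw [hSRl]; omega
    set L : ℕ → ℕ := RibbonAux.lo α with hL
    set D : ℕ → ℕ := RibbonAux.Dcard α with hD
    set T : Fin ℓ → ℕ → ℕ :=
      fun r c => if h : c < m then τ (σ.symm ⟨c, h⟩) ((r : ℕ) - L c) else 0 with hT
    have hcell : ∀ (c : ℕ), c < m → ∀ i : Fin ℓ,
        (rcell α i c ↔ (L c ≤ (i : ℕ) ∧ (i : ℕ) ≤ L c + D c)) := by
      intro c hc i
      exact RibbonAux.rcell_iff' α hposα hℓ ((hcm c).mp hc) i
    have hcellm : ∀ (i : Fin ℓ) (c : ℕ), rcell α i c → c < m := by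
      intro i c h
      exact (hcm c).mpr (RibbonAux.rcell_le_top α hposα h)
    have hβσ : ∀ j : Fin m, β (σ j) = 1 + D ((σ j : ℕ)) := by
      intro j
      have h1 := hβD ((σ j : ℕ)) (σ j).isLt
      simpa using h1
    have htop : ∀ c : ℕ, c < m → L c + D c ≤ ℓ - 1 := by
      intro c hc
      exact RibbonAux.topD_le α hℓ ((hcm c).mp hc)
    -- within-row weak decrease of τ, iterated
    have hchain : ∀ (a : Fin m) (q q' : ℕ), q ≤ q' → q' < β (σ a) → τ a q' ≤ τ a q := by
      intro a q q' hqq' hq'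
      induction q' with
      | zero => have : q = 0 := by omega
                subst this; exact le_rfl
      | succ p ih =>
        rcases Nat.lt_or_ge q (p + 1) with h | h
        · have h1 := hdec a p hq'
          have h2 := ih (by omega) (by omega)
          omega
        · have : q = p + 1 := by omega
          subst this; exact le_rfl
    have hstrict : ∀ (a : Fin m) (q q' : ℕ), q < q' → q' < β (σ a) → τ a q' < τ a q := by
      intro a q q' hqq' hq'
      rcases lt_or_eq_of_le (hchain a q q' (by omega) hq') with h | h
      · exact h
      · exfalso
        have := hinj a q' a q hq' (by omega) h
        omega
    have hposlt : ∀ (c : ℕ) (hc : c < m) (i : Fin ℓ), rcell α i c →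
        (i : ℕ) - L c < β (σ (σ.symm ⟨c, hc⟩)) := by
      intro c hc i h
      rw [Equiv.apply_symm_apply]
      rw [hβD c hc]
      rw [hcell c hc] at h
      omega
    refine ⟨T, ⟨?_, ?_, ?_, ?_, ?_⟩, ?_⟩
    · -- bounds
      intro i c h
      have hc := hcellm i c h
      simp only [hT, dif_pos hc]
      exact hbd _ _ (hposlt c hc i h)
    · -- injectivity
      intro i c i' c' h1 h2 heq
      have hc := hcellm i c h1
      have hc' := hcellm i' c' h2
      simp only [hT, dif_pos hc, dif_pos hc'] at heq
      obtain ⟨ha, hp⟩ := hinj _ _ _ _ (hposlt c hc i h1) (hposlt c' hc' i' h2) heq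
      have hcc' : c = c' := by
        have h5 := σ.symm.injective ha
        simpa using h5
      subst hcc'
      rw [hcell c hc] at h1 h2
      exact ⟨Fin.ext (by omega), rfl⟩
    · -- surjectivity
      intro v hv1 hv2
      obtain ⟨j, p, hp, hpv⟩ := hsurj v hv1 hv2
      have hc : ((σ j : ℕ)) < m := (σ j).isLt
      have hpD : p ≤ D ((σ j : ℕ)) := by have := hβσ j; omega
      have hiℓ : L ((σ j : ℕ)) + p < ℓ := by have := htop _ hc; omega
      refine ⟨⟨L ((σ j : ℕ)) + p, hiℓ⟩, (σ j : ℕ), ?_, ?_⟩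
      · rw [hcell _ hc]
        simp only []
        omega
      · simp only [hT, dif_pos hc]
        have h3 : (⟨((σ j : ℕ)), hc⟩ : Fin m) = σ j := rfl
        rw [h3, Equiv.symm_apply_apply]
        have h4 : L ((σ j : ℕ)) + p - L ((σ j : ℕ)) = p := by omega
        rw [h4]
        exact hpv
    · -- rows increase left to right
      intro i c h1 h2
      have hc := hcellm i c h1
      have hc1 := hcellm i (c + 1) h2
      rw [hcell c hc] at h1
      rw [hcell (c + 1) hc1] at h2
      -- the unique shared row: `i = L c + D c = L (c+1)`
      have hkey : L c + D c ≤ L (c + 1) := by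
        by_contra hcon
        push_neg at hcon
        have hg := RibbonAux.ge_of_ge α hℓ ((hcm (c + 1)).mp hc1)
          (show RibbonAux.lo α (c + 1) + 1 ≤ L c + D c by simpa [hL] using hcon)
        have hle := RibbonAux.SR_le_of_le α hℓ ((hcm c).mp hc)
          (le_refl (RibbonAux.lo α c + RibbonAux.Dcard α c))
        simp only [← hL, ← hD] at hg hle
        omega
      have hi1 : (i : ℕ) = L c + D c := by omega
      have hi2 : (i : ℕ) = L (c + 1) := by omega
      simp only [hT, dif_pos hc, dif_pos hc1]
      have e1 : (i : ℕ) - L c = D c := by omega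
      have e2 : (i : ℕ) - L (c + 1) = 0 := by omega
      rw [e1, e2]
      have hd1 : τ (σ.symm ⟨c, hc⟩) (D c) ≤ τ (σ.symm ⟨c, hc⟩) 0 := by
        apply hchain _ 0 (D c) (Nat.zero_le _)
        rw [Equiv.apply_symm_apply, hβD c hc]
        omega
      have hd2 : τ (σ.symm ⟨c, hc⟩) 0 < τ (σ.symm ⟨c + 1, hc1⟩) 0 := by
        rw [htype]
        simp only [Equiv.apply_symm_apply]
        exact Fin.mk_lt_mk.mpr (by omega)
      omega
    · -- columns increase top to bottom
      intro i i' c hii' h1 h2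
      have hc := hcellm i c h1
      rw [hcell c hc] at h1 h2
      simp only [hT, dif_pos hc]
      apply hstrict
      · have : (i : ℕ) < (i' : ℕ) := hii'
        omega
      · rw [Equiv.apply_symm_apply, hβD c hc]
        omega
    · -- the column/row correspondence
      intro j v
      have hc : ((σ j : ℕ)) < m := (σ j).isLt
      have h3 : (⟨((σ j : ℕ)), hc⟩ : Fin m) = σ j := rfl
      constructor
      · rintro ⟨p, hp, rfl⟩
        have hpD : p ≤ D ((σ j : ℕ)) := by have := hβσ j; omega
        have hiℓ : L ((σ j : ℕ)) + p < ℓ := by have := htop _ hc; omega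
        refine ⟨⟨L ((σ j : ℕ)) + p, hiℓ⟩, ?_, ?_⟩
        · rw [hcell _ hc]
          simp only []
          omega
        · simp only [hT, dif_pos hc]
          rw [h3, Equiv.symm_apply_apply]
          congr 1
          omega
      · rintro ⟨r, hr, rfl⟩
        rw [hcell _ hc] at hr
        refine ⟨(r : ℕ) - L ((σ j : ℕ)), ?_, ?_⟩
        · have := hβσ j; omega
        · simp only [hT, dif_pos hc]
          rw [h3, Equiv.symm_apply_apply]
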